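/- arXiv:1302.4776 — 2 statements merged into one kernel-verified Lean document; each statement's English description precedes it below -/
import Mathlib

section
/- For any two full-support probability distributions μ ≠ π on 𝒴, the value of the optimization problem min_{(q_1,q_2)} ( D(q_1‖μ) + D(q_2‖π) ), where the minimum is over pairs of probability distributions q_1, q_2 on 𝒴 satisfying D(q_2‖π) ≥ D(q_1‖π), is equal to 2·B(μ, π). -/
open Filter Finset Topology

noncomputable section

/-- `p` is a probability distribution on the finite alphabet. -/
def IsProb {𝓨 : Type} [Fintype 𝓨] (p : 𝓨 → ℝ) : Prop :=
  (∀ y, 0 ≤ p y) ∧ ∑ y, p y = 1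

/-- `p` has full support. -/
def FullSupport {𝓨 : Type} (p : 𝓨 → ℝ) : Prop := ∀ y, 0 < p y

/-- Relative entropy `D(q‖p)` (natural log, convention `0·log 0 = 0`,
which holds since `Real.log 0 = 0` in Mathlib). -/
def KL {𝓨 : Type} [Fintype 𝓨] (q p : 𝓨 → ℝ) : ℝ :=
  ∑ y, q y * Real.log (q y / p y)

/-- Bhattacharyya distance `B(p,q) = -log ∑ √(p y) √(q y)`. -/
def Bhat {𝓨 : Type} [Fintype 𝓨] (p q : 𝓨 → ℝ) : ℝ :=
  - Real.log (∑ y, Real.sqrt (p y) * Real.sqrt (q y))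

/-!
Write `Z = ∑ √(μ y) √(π y)` and `g = √μ √π / Z` for the normalized geometric mean of `μ` and `π`.
Since `log g = (log μ + log π) / 2 + B(μ, π)`, every distribution `q` satisfies
`D(q‖μ) + D(q‖π) = 2 D(q‖g) + 2 B(μ, π)`. The constraint `D(q₂‖π) ≥ D(q₁‖π)` gives
`D(q₁‖μ) + D(q₂‖π) ≥ D(q₁‖μ) + D(q₁‖π) ≥ 2 B(μ, π)` by Gibbs' inequality, and `q₁ = q₂ = g`
attains the bound.
-/

lemma sub_le_mul_log_div {q p : ℝ} (hq : 0 ≤ q) (hp : 0 < p) : q - p ≤ q * Real.log (q / p) := by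
  have h := mul_nonneg hp.le (InformationTheory.klFun_nonneg (div_nonneg hq hp.le))
  rw [InformationTheory.klFun_apply] at h
  field_simp at h
  linarith

lemma mul_log_div_eq {q p : ℝ} (hp : 0 < p) :
    q * Real.log (q / p) = q * (Real.log q - Real.log p) := by
  rcases eq_or_ne q 0 with rfl | hq
  · simp
  · rw [Real.log_div hq hp.ne']

variable {𝓨 : Type} [Fintype 𝓨]

lemma KL_nonneg {q p : 𝓨 → ℝ} (hq : ∀ y, 0 ≤ q y) (hp : FullSupport p)
    (hsum : ∑ y, p y ≤ ∑ y, q y) : 0 ≤ KL q p := by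
  have h := sum_le_sum fun y (_ : y ∈ univ) => sub_le_mul_log_div (hq y) (hp y)
  rw [sum_sub_distrib] at h
  exact (sub_nonneg.2 hsum).trans h

lemma KL_self (p : 𝓨 → ℝ) : KL p p = 0 := by
  simp [KL]

def geomMeanDist (μ π : 𝓨 → ℝ) (y : 𝓨) : ℝ :=
  √(μ y) * √(π y) / ∑ z, √(μ z) * √(π z)

section FullSupport

variable {μ π : 𝓨 → ℝ} (hμ : FullSupport μ) (hπ : FullSupport π)
include hμ hπ

lemma sum_sqrt_mul_sqrt_pos [Nonempty 𝓨] : 0 < ∑ y, √(μ y) * √(π y) :=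
  sum_pos (fun y _ => mul_pos (Real.sqrt_pos.2 (hμ y)) (Real.sqrt_pos.2 (hπ y))) univ_nonempty

lemma fullSupport_geomMeanDist [Nonempty 𝓨] : FullSupport (geomMeanDist μ π) := fun y =>
  div_pos (mul_pos (Real.sqrt_pos.2 (hμ y)) (Real.sqrt_pos.2 (hπ y)))
    (sum_sqrt_mul_sqrt_pos hμ hπ)

lemma isProb_geomMeanDist [Nonempty 𝓨] : IsProb (geomMeanDist μ π) :=
  ⟨fun y => (fullSupport_geomMeanDist hμ hπ y).le, by
    simp only [geomMeanDist]
    rw [← sum_div, div_self (sum_sqrt_mul_sqrt_pos hμ hπ).ne']⟩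

lemma log_geomMeanDist [Nonempty 𝓨] (y : 𝓨) :
    Real.log (geomMeanDist μ π y) = (Real.log (μ y) + Real.log (π y)) / 2 + Bhat μ π := by
  have hμy := Real.sqrt_pos.2 (hμ y)
  have hπy := Real.sqrt_pos.2 (hπ y)
  rw [geomMeanDist, Bhat, Real.log_div (mul_pos hμy hπy).ne' (sum_sqrt_mul_sqrt_pos hμ hπ).ne',
    Real.log_mul hμy.ne' hπy.ne', Real.log_sqrt (hμ y).le, Real.log_sqrt (hπ y).le]
  ring

lemma KL_add_KL_eq [Nonempty 𝓨] {q : 𝓨 → ℝ} (hq : ∑ y, q y = 1) :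
    KL q μ + KL q π = 2 * KL q (geomMeanDist μ π) + 2 * Bhat μ π := by
  calc KL q μ + KL q π
      = ∑ y, (2 * (q y * Real.log (q y / geomMeanDist μ π y)) + 2 * Bhat μ π * q y) := by
        rw [KL, KL, ← sum_add_distrib]
        refine sum_congr rfl fun y _ => ?_
        rw [mul_log_div_eq (hμ y), mul_log_div_eq (hπ y),
          mul_log_div_eq (fullSupport_geomMeanDist hμ hπ y), log_geomMeanDist hμ hπ]
        ring
    _ = 2 * KL q (geomMeanDist μ π) + 2 * Bhat μ π := by
        rw [sum_add_distrib, ← mul_sum, ← mul_sum, hq, mul_one, KL]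

end FullSupport

theorem statement6_general (𝓨 : Type) [Fintype 𝓨] [Nonempty 𝓨]
    (μ π : 𝓨 → ℝ)
    (hμf : FullSupport μ) (hπf : FullSupport π) :
    IsLeast {x : ℝ | ∃ q₁ q₂ : 𝓨 → ℝ, IsProb q₁ ∧ IsProb q₂ ∧
        KL q₂ π ≥ KL q₁ π ∧
        x = KL q₁ μ + KL q₂ π}
      (2 * Bhat μ π) := by
  have hg := isProb_geomMeanDist hμf hπf
  refine ⟨⟨_, _, hg, hg, le_rfl, ?_⟩, ?_⟩
  · linarith [KL_add_KL_eq hμf hπf hg.2, KL_self (geomMeanDist μ π)]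
  · rintro _ ⟨q₁, q₂, hq₁, -, hle, rfl⟩
    have hgibbs : 0 ≤ KL q₁ (geomMeanDist μ π) :=
      KL_nonneg hq₁.1 (fullSupport_geomMeanDist hμf hπf) (by rw [hg.2, hq₁.2])
    linarith [KL_add_KL_eq hμf hπf hq₁.2]

/-- `min { D(q₁‖μ)+D(q₂‖π) : D(q₂‖π) ≥ D(q₁‖π) } = 2·B(μ,π)`. -/
theorem statement6 (𝓨 : Type) [Fintype 𝓨] [Nonempty 𝓨]
    (μ π : 𝓨 → ℝ) (hμ : IsProb μ) (hπ : IsProb π)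
    (hμf : FullSupport μ) (hπf : FullSupport π) (hne : μ ≠ π) :
    IsLeast {x : ℝ | ∃ q₁ q₂ : 𝓨 → ℝ, IsProb q₁ ∧ IsProb q₂ ∧
        KL q₂ π ≥ KL q₁ π ∧
        x = KL q₁ μ + KL q₂ π}
      (2 * Bhat μ π) :=
  statement6_general 𝓨 μ π hμf hπf
end
end

section
/- For any full-support probability distributions μ_i, μ_j, π on 𝒴, the Chernoff information between the product distributions μ_i⊗π and π⊗μ_j on 𝒴×𝒴 satisfies C( μ_i(y)π(y') , π(y)μ_j(y') ) ≥ B(μ_i, π) + B(μ_j, π) ≥ min( 2·B(μ_i, π) , 2·B(μ_j, π) ). -/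
open Filter Finset Topology

noncomputable section

/-- Chernoff information `C(p,q) = sup_{s ∈ [0,1]} -log ∑ (p y)^s (q y)^(1-s)`. -/
def Chernoff {𝓨 : Type} [Fintype 𝓨] (p q : 𝓨 → ℝ) : ℝ :=
  ⨆ s : Set.Icc (0:ℝ) 1, - Real.log (∑ y, p y ^ (s : ℝ) * q y ^ (1 - (s : ℝ)))

/- At `s = 1/2` the Chernoff exponent is the Bhattacharyya distance, so `B ≤ C`; and the
Bhattacharyya coefficient of two product distributions factorises, which makes `B`
additive: `B(μᵢ⊗π, π⊗μⱼ) = B(μᵢ,π) + B(π,μⱼ)`. -/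

lemma min_le_rpow_mul_rpow {a b s : ℝ} (ha : 0 ≤ a) (hb : 0 ≤ b) (hs₀ : 0 ≤ s) (hs₁ : s ≤ 1) :
    min a b ≤ a ^ s * b ^ (1 - s) := by
  have hm : 0 ≤ min a b := le_min ha hb
  calc min a b = min a b ^ s * min a b ^ (1 - s) := by
        rw [← Real.rpow_add_of_nonneg hm hs₀ (by linarith), add_sub_cancel, Real.rpow_one]
    _ ≤ a ^ s * b ^ (1 - s) := by
        gcongr
        exacts [min_le_left a b, min_le_right a b]

lemma Bhat_comm {𝓨 : Type} [Fintype 𝓨] (p q : 𝓨 → ℝ) : Bhat p q = Bhat q p := by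
  simp only [Bhat, mul_comm]

lemma Bhat_prod {𝓨 𝓨' : Type} [Fintype 𝓨] [Fintype 𝓨'] {p r : 𝓨 → ℝ} {q t : 𝓨' → ℝ}
    (hp : ∀ y, 0 ≤ p y) (hr : ∀ y, 0 ≤ r y)
    (hpr : ∑ y, √(p y) * √(r y) ≠ 0) (hqt : ∑ y, √(q y) * √(t y) ≠ 0) :
    Bhat (fun z : 𝓨 × 𝓨' => p z.1 * q z.2) (fun z => r z.1 * t z.2) = Bhat p r + Bhat q t := by
  have hfactor : ∑ z : 𝓨 × 𝓨', √(p z.1 * q z.2) * √(r z.1 * t z.2)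
      = (∑ y, √(p y) * √(r y)) * ∑ y, √(q y) * √(t y) := by
    rw [Fintype.sum_prod_type, Finset.sum_mul_sum]
    refine Finset.sum_congr rfl fun y _ => Finset.sum_congr rfl fun y' _ => ?_
    rw [Real.sqrt_mul (hp y), Real.sqrt_mul (hr y)]
    ring
  rw [Bhat, hfactor, Real.log_mul hpr hqt, Bhat, Bhat]
  ring

lemma bddAbove_range_neg_log_sum_rpow_mul_rpow {𝓩 : Type} [Fintype 𝓩] [Nonempty 𝓩]
    {P Q : 𝓩 → ℝ} (hP : ∀ z, 0 < P z) (hQ : ∀ z, 0 < Q z) :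
    BddAbove (Set.range fun s : Set.Icc (0:ℝ) 1 =>
      - Real.log (∑ z, P z ^ (s : ℝ) * Q z ^ (1 - (s : ℝ)))) := by
  have hmin : 0 < ∑ z, min (P z) (Q z) :=
    Finset.sum_pos (fun z _ => lt_min (hP z) (hQ z)) univ_nonempty
  refine ⟨- Real.log (∑ z, min (P z) (Q z)), ?_⟩
  rintro _ ⟨⟨s, hs₀, hs₁⟩, rfl⟩
  have hle : ∑ z, min (P z) (Q z) ≤ ∑ z, P z ^ s * Q z ^ (1 - s) :=
    Finset.sum_le_sum fun z _ => min_le_rpow_mul_rpow (hP z).le (hQ z).le hs₀ hs₁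
  simpa using Real.log_le_log hmin hle

lemma Bhat_le_Chernoff {𝓩 : Type} [Fintype 𝓩] [Nonempty 𝓩] {P Q : 𝓩 → ℝ}
    (hP : ∀ z, 0 < P z) (hQ : ∀ z, 0 < Q z) : Bhat P Q ≤ Chernoff P Q := by
  have hhalf : Bhat P Q = - Real.log (∑ z, P z ^ (1 / 2 : ℝ) * Q z ^ (1 - 1 / 2 : ℝ)) := by
    norm_num [Bhat, Real.sqrt_eq_rpow]
  rw [hhalf]
  exact le_ciSup (f := fun s : Set.Icc (0:ℝ) 1 =>
      - Real.log (∑ z, P z ^ (s : ℝ) * Q z ^ (1 - (s : ℝ))))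
    (bddAbove_range_neg_log_sum_rpow_mul_rpow hP hQ) ⟨1 / 2, by norm_num, by norm_num⟩

lemma sum_sqrt_mul_sqrt_pos_s15 {𝓨 : Type} [Fintype 𝓨] [Nonempty 𝓨] {p q : 𝓨 → ℝ}
    (hp : FullSupport p) (hq : FullSupport q) : 0 < ∑ y, √(p y) * √(q y) :=
  Finset.sum_pos (fun y _ => by have := hp y; have := hq y; positivity) univ_nonempty

lemma min_two_mul_le_add (a b : ℝ) : min (2 * a) (2 * b) ≤ a + b :=
  min_le_iff.2 ((le_total a b).imp (fun _ => by linarith) fun _ => by linarith)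

theorem statement15_general (𝓨 : Type) [Fintype 𝓨] [Nonempty 𝓨]
    (μi μj π : 𝓨 → ℝ)
    (hμif : FullSupport μi) (hμjf : FullSupport μj) (hπf : FullSupport π) :
    Bhat μi π + Bhat μj π ≤
      Chernoff (fun z : 𝓨 × 𝓨 => μi z.1 * π z.2) (fun z : 𝓨 × 𝓨 => π z.1 * μj z.2) ∧
    min (2 * Bhat μi π) (2 * Bhat μj π) ≤ Bhat μi π + Bhat μj π := by
  refine ⟨?_, min_two_mul_le_add _ _⟩
  calc Bhat μi π + Bhat μj π
      = Bhat (fun z : 𝓨 × 𝓨 => μi z.1 * π z.2) (fun z => π z.1 * μj z.2) := by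
        rw [Bhat_prod (fun y => (hμif y).le) (fun y => (hπf y).le)
          (sum_sqrt_mul_sqrt_pos_s15 hμif hπf).ne' (sum_sqrt_mul_sqrt_pos_s15 hπf hμjf).ne',
          Bhat_comm π μj]
    _ ≤ _ := Bhat_le_Chernoff (fun z => mul_pos (hμif z.1) (hπf z.2))
        fun z => mul_pos (hπf z.1) (hμjf z.2)

/-- `C(μᵢ⊗π, π⊗μⱼ) ≥ B(μᵢ,π) + B(μⱼ,π) ≥ min(2B(μᵢ,π), 2B(μⱼ,π))`. -/
theorem statement15 (𝓨 : Type) [Fintype 𝓨] [Nonempty 𝓨]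
    (μi μj π : 𝓨 → ℝ) (hμi : IsProb μi) (hμj : IsProb μj) (hπ : IsProb π)
    (hμif : FullSupport μi) (hμjf : FullSupport μj) (hπf : FullSupport π) :
    Bhat μi π + Bhat μj π ≤
      Chernoff (fun z : 𝓨 × 𝓨 => μi z.1 * π z.2) (fun z : 𝓨 × 𝓨 => π z.1 * μj z.2) ∧
    min (2 * Bhat μi π) (2 * Bhat μj π) ≤ Bhat μi π + Bhat μj π :=
  statement15_general 𝓨 μi μj π hμif hμjf hπf
end
end
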